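/- arXiv:2009.06688 — 4 statements merged into one kernel-verified Lean document; each statement's English description precedes it below -/
import Mathlib

section
/- Let A be an n×n positive semidefinite Hermitian matrix that is singular (det A = 0). Then the sum over i of a_{ii} times the determinant of the (n−1)×(n−1) matrix obtained by deleting the i-th row and i-th column of A is at most (n/(n−1))^{n−1} times the product of the diagonal entries of A. -/
/-!
Conjugating by `diag (a_ii^{-1/2})` reduces to a matrix `B` with unit diagonal (a zero diagonal
entry of a positive semidefinite matrix forces its whole column to vanish, and then both sides
are `0`). The sum of the principal `n × n` minors of `B` is `tr (adj B)`, the elementary symmetric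
function `e_n` of its eigenvalues. One eigenvalue is `0` because `B` is singular, so `e_n` is the
product of the other `n` eigenvalues, which AM-GM bounds by `(tr B / n) ^ n = ((n + 1) / n) ^ n`.
-/

open Finset Matrix

theorem Real.prod_le_sum_div_card_pow {ι : Type*} (s : Finset ι) {z : ι → ℝ}
    (hz : ∀ i ∈ s, 0 ≤ z i) : ∏ i ∈ s, z i ≤ ((∑ i ∈ s, z i) / #s) ^ #s := by
  rcases s.eq_empty_or_nonempty with rfl | hs
  · simp
  have hcard : #s ≠ 0 := hs.card_ne_zero
  have hmean : (∏ i ∈ s, z i) ^ ((#s : ℝ)⁻¹) ≤ (∑ i ∈ s, z i) / #s := by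
    simpa using Real.geom_mean_le_arith_mean s 1 z (fun _ _ => zero_le_one)
      (by simpa using hs) hz
  calc ∏ i ∈ s, z i = ((∏ i ∈ s, z i) ^ ((#s : ℝ)⁻¹)) ^ #s :=
        (Real.rpow_inv_natCast_pow (prod_nonneg hz) hcard).symm
    _ ≤ ((∑ i ∈ s, z i) / #s) ^ #s :=
        pow_le_pow_left₀ (Real.rpow_nonneg (prod_nonneg hz) _) hmean _

namespace Matrix

theorem sum_det_submatrix_succAbove_eq_trace_adjugate {R : Type*} [CommRing R] {n : ℕ}
    (A : Matrix (Fin (n + 1)) (Fin (n + 1)) R) :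
    ∑ i : Fin (n + 1), (A.submatrix i.succAbove i.succAbove).det = A.adjugate.trace := by
  refine sum_congr rfl fun i _ => ?_
  rw [diag_apply, adjugate_fin_succ_eq_det_submatrix, Even.neg_one_pow ⟨i, rfl⟩, one_mul]

theorem det_submatrix_diagonal_mul_mul_diagonal {R m l : Type*} [CommRing R]
    [Fintype m] [DecidableEq m] [Fintype l] [DecidableEq l]
    (d : m → R) (A : Matrix m m R) (f : l → m) :
    ((diagonal d * A * diagonal d).submatrix f f).det =
      (∏ k, d (f k)) ^ 2 * (A.submatrix f f).det := by
  have : (diagonal d * A * diagonal d).submatrix f f =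
      diagonal (d ∘ f) * A.submatrix f f * diagonal (d ∘ f) := by
    ext; simp [mul_diagonal, diagonal_mul]
  rw [this, det_mul, det_mul, det_diagonal]
  simp only [Function.comp_apply]
  ring

section succAbove

variable {R : Type*} [CommRing R] {n : ℕ}

theorem sum_diag_mul_det_submatrix_succAbove_eq_zero_of_col_eq_zero
    {A : Matrix (Fin (n + 1)) (Fin (n + 1)) R} {k : Fin (n + 1)} (hk : ∀ j, A j k = 0) :
    ∑ i : Fin (n + 1), A i i * (A.submatrix i.succAbove i.succAbove).det = 0 := by
  refine sum_eq_zero fun i _ => ?_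
  rcases eq_or_ne i k with rfl | hik
  · rw [hk i, zero_mul]
  · obtain ⟨l, hl⟩ := Fin.exists_succAbove_eq hik.symm
    rw [det_eq_zero_of_column_eq_zero l fun j => by simp [hl, hk], mul_zero]

theorem sum_diag_mul_det_submatrix_succAbove_eq_prod_diag_mul
    (A : Matrix (Fin (n + 1)) (Fin (n + 1)) R) {d : Fin (n + 1) → R}
    (hd : ∀ i, d i * A i i * d i = 1) :
    ∑ i : Fin (n + 1), A i i * (A.submatrix i.succAbove i.succAbove).det =
      (∏ i, A i i) * ∑ i : Fin (n + 1),
        ((diagonal d * A * diagonal d).submatrix i.succAbove i.succAbove).det := by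
  rw [mul_sum]
  refine sum_congr rfl fun i _ => ?_
  have hunit : (∏ k, A (i.succAbove k) (i.succAbove k)) * (∏ k, d (i.succAbove k)) ^ 2 = 1 := by
    rw [← prod_pow, ← prod_mul_distrib]
    exact prod_eq_one fun k _ => by linear_combination hd (i.succAbove k)
  rw [det_submatrix_diagonal_mul_mul_diagonal, Fin.prod_univ_succAbove _ i]
  linear_combination (-(A i i * (A.submatrix i.succAbove i.succAbove).det)) * hunit

end succAbove

theorem IsHermitian.trace_adjugate_eq_sum_prod_eigenvalues {𝕜 m : Type*} [RCLike 𝕜]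
    [Fintype m] [DecidableEq m] {A : Matrix m m 𝕜} (hA : A.IsHermitian) :
    A.adjugate.trace = ∑ i, ∏ j ∈ univ.erase i, (hA.eigenvalues j : 𝕜) := by
  set U : Matrix m m 𝕜 := (hA.eigenvectorUnitary : Matrix m m 𝕜)
  set D := diagonal (RCLike.ofReal ∘ hA.eigenvalues : m → 𝕜)
  calc A.adjugate.trace = (U * D * star U).adjugate.trace := by
        conv_lhs => rw [hA.spectral_theorem, Unitary.conjStarAlgAut_apply]
    _ = (D.adjugate * (star U * U).adjugate).trace := by
        rw [adjugate_mul_distrib, adjugate_mul_distrib, trace_mul_comm, mul_assoc,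
          ← adjugate_mul_distrib]
    _ = _ := by
        rw [Unitary.coe_star_mul_self, adjugate_one, mul_one, adjugate_diagonal, trace_diagonal]
        rfl

open scoped ComplexOrder in
theorem PosSemidef.col_eq_zero_of_diag_eq_zero {𝕜 m : Type*} [RCLike 𝕜] [Fintype m]
    [DecidableEq m] {A : Matrix m m 𝕜} (hA : A.PosSemidef) {i : m} (h : A i i = 0) (j : m) :
    A j i = 0 := by
  have := (hA.dotProduct_mulVec_zero_iff (Pi.single i 1)).mp (by simp [h])
  simpa [mulVec_single_one] using congrFun this j

theorem PosSemidef.trace_adjugate_le_of_det_eq_zero {m : Type*} [Fintype m] [DecidableEq m]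
    {A : Matrix m m ℝ} (hA : A.PosSemidef) (hdet : A.det = 0) :
    A.adjugate.trace ≤ (A.trace / (Fintype.card m - 1 : ℕ)) ^ (Fintype.card m - 1) := by
  have hH := hA.isHermitian
  obtain ⟨k, -, hk⟩ : ∃ k ∈ univ, hH.eigenvalues k = 0 :=
    prod_eq_zero_iff.mp (by simpa [hH.det_eq_prod_eigenvalues] using hdet)
  have htrace : A.trace = ∑ j ∈ univ.erase k, hH.eigenvalues j := by
    rw [hH.trace_eq_sum_eigenvalues, ← add_sum_erase _ _ (mem_univ k)]
    simp [hk]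
  have hadj : A.adjugate.trace = ∏ j ∈ univ.erase k, hH.eigenvalues j := by
    rw [hH.trace_adjugate_eq_sum_prod_eigenvalues, sum_eq_single k]
    · simp
    · intro i _ hik
      exact prod_eq_zero (mem_erase.mpr ⟨hik.symm, mem_univ k⟩) (by simp [hk])
    · simp
  rw [hadj, htrace, ← card_univ, ← card_erase_of_mem (mem_univ k)]
  exact Real.prod_le_sum_div_card_pow _ fun j _ => hA.eigenvalues_nonneg j

end Matrix

theorem stmt_0_general (n : ℕ) (A : Matrix (Fin (n + 1)) (Fin (n + 1)) ℝ)
    (hA : A.PosSemidef) (hdet : A.det = 0) :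
    ∑ i, A i i * (A.submatrix i.succAbove i.succAbove).det ≤
      (((n : ℝ) + 1) / n) ^ n * ∏ i, A i i := by
  by_cases hzero : ∃ k, A k k = 0
  · obtain ⟨k, hk⟩ := hzero
    rw [sum_diag_mul_det_submatrix_succAbove_eq_zero_of_col_eq_zero
      (hA.col_eq_zero_of_diag_eq_zero hk), prod_eq_zero (f := fun i => A i i) (mem_univ k) hk,
      mul_zero]
  push Not at hzero
  have hpos : ∀ i, 0 < A i i := fun i => hA.diag_nonneg.lt_of_ne' (hzero i)
  set d : Fin (n + 1) → ℝ := fun i => (√(A i i))⁻¹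
  have hd : ∀ i, d i * A i i * d i = 1 := fun i => by
    have hsqrt : √(A i i) ≠ 0 := (Real.sqrt_pos.2 (hpos i)).ne'
    simp only [d]
    field_simp
    exact (Real.sq_sqrt (hpos i).le).symm
  set B := diagonal d * A * diagonal d
  have hB : B.PosSemidef := by
    simpa [diagonal_conjTranspose] using hA.mul_mul_conjTranspose_same (diagonal d)
  have hBdet : B.det = 0 := by simp [B, hdet]
  have hBtrace : B.trace = n + 1 := by
    simp [B, trace, mul_diagonal, diagonal_mul, hd]
  rw [sum_diag_mul_det_submatrix_succAbove_eq_prod_diag_mul A hd,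
    sum_det_submatrix_succAbove_eq_trace_adjugate, mul_comm]
  gcongr
  · exact prod_nonneg fun i _ => (hpos i).le
  · simpa [hBtrace] using hB.trace_adjugate_le_of_det_eq_zero hBdet

/-- For an (n+1)×(n+1) real symmetric positive semidefinite singular
matrix `A` (so size ≥ 2 since `1 ≤ n`), the sum over `i` of `A i i` times the
determinant of the principal submatrix obtained by deleting row `i` and column `i`
is at most `((n+1)/n)^n` times the product of the diagonal entries. -/
theorem stmt_0 (n : ℕ) (hn : 1 ≤ n) (A : Matrix (Fin (n + 1)) (Fin (n + 1)) ℝ)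
    (hA : A.PosSemidef) (hdet : A.det = 0) :
    ∑ i, A i i * (A.submatrix i.succAbove i.succAbove).det ≤
      (((n : ℝ) + 1) / n) ^ n * ∏ i, A i i :=
  stmt_0_general n A hA hdet
end

section
/- Let B be an n×n positive semidefinite Hermitian matrix with all diagonal entries equal to 1 and det(B) = 0. Then the sum of the principal (n−1)×(n−1) minors of B (i.e., the sum over i of det(B|(i,i))) is at most (n/(n−1))^{n−1}. -/
open Matrix Finset

/-- For an (n+1)×(n+1) real symmetric positive semidefinite singular
matrix `B` with all diagonal entries equal to 1, the sum of the principal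
n×n minors is at most `((n+1)/n)^n`. -/
theorem stmt_2 (n : ℕ) (hn : 1 ≤ n) (B : Matrix (Fin (n + 1)) (Fin (n + 1)) ℝ)
    (hB : B.PosSemidef) (hdiag : ∀ i, B i i = 1) (hdet : B.det = 0) :
    ∑ i : Fin (n + 1), (B.submatrix i.succAbove i.succAbove).det ≤ (((n : ℝ) + 1) / n) ^ n := by
  have hH : B.IsHermitian := hB.isHermitian
  set U : Matrix (Fin (n+1)) (Fin (n+1)) ℝ := (hH.eigenvectorUnitary : Matrix (Fin (n+1)) (Fin (n+1)) ℝ) with hUdef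
  set lam : Fin (n+1) → ℝ := hH.eigenvalues with hlamdef
  have hspec : B = U * Matrix.diagonal lam * star U := by
    have := hH.spectral_theorem
    simpa [RCLike.ofReal_real_eq_id] using this
  have hUU : star U * U = 1 :=
    Matrix.mem_unitaryGroup_iff'.mp (hH.eigenvectorUnitary).2
  -- eigenvalues nonneg
  have hnonneg : ∀ i, 0 ≤ lam i := fun i => hB.eigenvalues_nonneg i
  -- product = 0
  have hprod : ∏ i, lam i = 0 := by
    have := hH.det_eq_prod_eigenvalues
    rw [hdet] at this
    simpa using this.symm
  obtain ⟨k, _, hk⟩ := Finset.prod_eq_zero_iff.mp hprod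
  -- sum of eigenvalues = n+1
  have htrace : ∑ i, lam i = (n : ℝ) + 1 := by
    have h1 : B.trace = ∑ i, lam i := by
      conv_lhs => rw [hspec]
      rw [Matrix.trace_mul_cycle, hUU, Matrix.one_mul,
        Matrix.trace_diagonal]
    have h2 : B.trace = (n : ℝ) + 1 := by
      simp [Matrix.trace, hdiag, Finset.card_univ]
    rw [← h1, h2]
  -- sum of principal minors = trace of adjugate
  have h1 : ∑ i : Fin (n + 1), (B.submatrix i.succAbove i.succAbove).det
      = (Matrix.adjugate B).trace := by
    rw [Matrix.trace]
    refine Finset.sum_congr rfl fun i _ => ?_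
    rw [Matrix.diag_apply, Matrix.adjugate_fin_succ_eq_det_submatrix,
      Even.neg_one_pow ⟨(i : ℕ), rfl⟩, one_mul]
  -- trace adjugate B = trace adjugate diagonal lam
  have h2 : (Matrix.adjugate B).trace = (Matrix.adjugate (Matrix.diagonal lam)).trace := by
    conv_lhs => rw [hspec]
    rw [Matrix.adjugate_mul_distrib, Matrix.adjugate_mul_distrib,
      Matrix.trace_mul_comm, Matrix.mul_assoc, ← Matrix.adjugate_mul_distrib, hUU,
      Matrix.adjugate_one, Matrix.mul_one]
  have h3 : (Matrix.adjugate (Matrix.diagonal lam)).trace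
      = ∑ i, ∏ j ∈ Finset.univ.erase i, lam j := by
    rw [Matrix.adjugate_diagonal, Matrix.trace_diagonal]
  have h4 : ∑ i, ∏ j ∈ Finset.univ.erase i, lam j = ∏ j ∈ Finset.univ.erase k, lam j := by
    refine Finset.sum_eq_single k (fun i _ hik => ?_) (by simp)
    exact Finset.prod_eq_zero (Finset.mem_erase.mpr ⟨Ne.symm hik, Finset.mem_univ k⟩) hk
  -- AM-GM on the n remaining eigenvalues
  have hcard : (Finset.univ.erase k).card = n := by
    rw [Finset.card_erase_of_mem (Finset.mem_univ k)]
    simp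
  have hsum : ∑ j ∈ Finset.univ.erase k, lam j = (n : ℝ) + 1 := by
    rw [← Finset.add_sum_erase _ _ (Finset.mem_univ k)] at htrace
    rw [hk, zero_add] at htrace
    exact htrace
  have hn0 : (0:ℝ) < (n : ℝ) := by exact_mod_cast hn
  have hamgm : ∏ j ∈ Finset.univ.erase k, lam j ^ ((n : ℝ)⁻¹)
      ≤ ((n : ℝ) + 1) / n := by
    have := Real.geom_mean_le_arith_mean_weighted (Finset.univ.erase k)
      (fun _ => (n : ℝ)⁻¹) lam (fun i _ => by positivity)
      (by rw [Finset.sum_const, hcard, nsmul_eq_mul, mul_inv_cancel₀ hn0.ne'])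
      (fun i _ => hnonneg i)
    calc ∏ j ∈ Finset.univ.erase k, lam j ^ ((n : ℝ)⁻¹)
        ≤ ∑ j ∈ Finset.univ.erase k, (n:ℝ)⁻¹ * lam j := this
      _ = ((n : ℝ) + 1) / n := by
          rw [← Finset.mul_sum, hsum, div_eq_inv_mul]
  have key : ∏ j ∈ Finset.univ.erase k, lam j ≤ (((n : ℝ) + 1) / n) ^ n := by
    have hP : 0 ≤ ∏ j ∈ Finset.univ.erase k, lam j ^ ((n : ℝ)⁻¹) :=
      Finset.prod_nonneg fun i _ => Real.rpow_nonneg (hnonneg i) _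
    have := pow_le_pow_left₀ hP hamgm n
    calc ∏ j ∈ Finset.univ.erase k, lam j
        = (∏ j ∈ Finset.univ.erase k, lam j ^ ((n : ℝ)⁻¹)) ^ n := by
          rw [← Finset.prod_pow]
          refine Finset.prod_congr rfl fun i _ => ?_
          rw [← Real.rpow_natCast (lam i ^ ((n:ℝ)⁻¹)) n, ← Real.rpow_mul (hnonneg i),
            inv_mul_cancel₀ hn0.ne', Real.rpow_one]
      _ ≤ (((n : ℝ) + 1) / n) ^ n := this
  rw [h1, h2, h3, h4]
  exact key
end

section
/- For every natural number n ≥ 2 and every real ε with 1/n ≤ ε ≤ 1, the inequality (εn − 1)^{n−1} ≤ ε^n (n − 1)^{n−1} holds. -/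
/-! Bernoulli's inequality `a ^ n + n a ^ (n - 1) b ≤ (a + b) ^ n`, applied to `a = εn - 1` and
`b = 1 - ε` (so that `a + b = ε (n - 1)`), has left-hand side `(εn - 1) ^ (n - 1) (n - 1)`;
dividing by `n - 1` gives the claim. -/

theorem mul_natCast_sub_one_pow_pred_mul_le {R : Type*} [CommRing R] [LinearOrder R]
    [IsStrictOrderedRing R] {n : ℕ} {ε : R} (h : 1 ≤ ε * n) :
    (ε * n - 1) ^ (n - 1) * ((n : R) - 1) ≤ (ε * ((n : R) - 1)) ^ n := by
  obtain ⟨m, rfl⟩ : ∃ m, n = m + 1 :=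
    Nat.exists_eq_add_one.2 (Nat.pos_of_ne_zero (by rintro rfl; simp at h; linarith))
  push_cast at h ⊢
  have hm : (0 : R) ≤ m := Nat.cast_nonneg m
  have hε : 0 ≤ ε := by nlinarith
  calc (ε * (m + 1) - 1) ^ (m + 1 - 1) * (m + 1 - 1)
      = (ε * (m + 1) - 1) ^ (m + 1) + (m + 1 : ℕ) * (ε * (m + 1) - 1) ^ (m + 1 - 1) * (1 - ε) := by
        simp only [Nat.add_sub_cancel]; push_cast; ring
    _ ≤ (ε * (m + 1) - 1 + (1 - ε)) ^ (m + 1) :=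
        pow_add_mul_le_add_pow (sub_nonneg.2 h) (by nlinarith) _
    _ = (ε * (m + 1 - 1)) ^ (m + 1) := by ring

theorem stmt_9_general (n : ℕ) (hn : 2 ≤ n) (ε : ℝ) (hε1 : 1 / (n : ℝ) ≤ ε) :
    (ε * n - 1) ^ (n - 1) ≤ ε ^ n * ((n : ℝ) - 1) ^ (n - 1) := by
  have hn1 : (0 : ℝ) < n - 1 := by
    have : (2 : ℝ) ≤ n := by exact_mod_cast hn
    linarith
  have h : 1 ≤ ε * n := by rwa [div_le_iff₀ (by linarith)] at hε1
  have hpow : ((n : ℝ) - 1) ^ n = ((n : ℝ) - 1) ^ (n - 1) * (n - 1) := by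
    rw [← pow_succ, Nat.sub_add_cancel (by omega)]
  have key := mul_natCast_sub_one_pow_pred_mul_le h
  rw [mul_pow, hpow, ← mul_assoc] at key
  exact le_of_mul_le_mul_right key hn1

/-- For every natural `n ≥ 2` and every real `ε` with
`1/n ≤ ε ≤ 1`, we have `(εn - 1)^(n-1) ≤ ε^n (n-1)^(n-1)`. -/
theorem stmt_9 (n : ℕ) (hn : 2 ≤ n) (ε : ℝ) (hε1 : 1 / (n : ℝ) ≤ ε) (hε2 : ε ≤ 1) :
    (ε * n - 1) ^ (n - 1) ≤ ε ^ n * ((n : ℝ) - 1) ^ (n - 1) :=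
  stmt_9_general n hn ε hε1
end

section
/- Let M be the (m+n−1)×(m+n−1) block matrix whose first n rows and n−1 columns contain the entries: row 1 begins with n−1 zeros followed by m entries all equal to −1; for 2 ≤ i ≤ n, row i has a_i in column i−1, zeros elsewhere among the first n−1 columns, and row entries in the last m columns given by a Ferrers pattern C of −1's whose first row is all −1's and such that each of rows 2 through n sums to zero; the last m−1 rows have the transpose Ferrers pattern in the first n−1 columns and diag(0,b_2,...,b_m) pattern in the last m columns arranged so each of the last m−1 columns sums to zero, with a_2 ≥ ... ≥ a_n and b_2 ≥ ... ≥ b_m. Then det(M) = (−1)^n ∏_{i=2}^n a_i ∏_{j=2}^m b_j. -/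
/-- Index of the `i`-th of the first `p+1` rows (the "a"-rows) of the matrix `M`. -/
def rowA (p q : ℕ) (i : Fin (p + 1)) : Fin (p + 1 + q) :=
  Fin.castLE (by omega) i

/-- Index of the `i`-th of the last `q` rows (the "b"-rows) of the matrix `M`. -/
def rowB (p q : ℕ) (i : Fin q) : Fin (p + 1 + q) :=
  ⟨p + 1 + (i : ℕ), by have := i.isLt; omega⟩

/-- Index of the `j`-th of the first `p` columns (the "a"-columns) of `M`. -/
def colA (p q : ℕ) (j : Fin p) : Fin (p + 1 + q) :=
  Fin.castLE (by omega) j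

/-- Index of the `j`-th of the last `q+1` columns (the "b"-columns) of `M`. -/
def colB (p q : ℕ) (j : Fin (q + 1)) : Fin (p + 1 + q) :=
  ⟨p + (j : ℕ), by have := j.isLt; omega⟩

section Helpers

variable {p q : ℕ}

lemma rowA_val (i : Fin (p + 1)) : ((rowA p q i : Fin (p + 1 + q)) : ℕ) = (i : ℕ) := rfl
lemma rowB_val (i : Fin q) : ((rowB p q i : Fin (p + 1 + q)) : ℕ) = p + 1 + (i : ℕ) := rfl
lemma colA_val (j : Fin p) : ((colA p q j : Fin (p + 1 + q)) : ℕ) = (j : ℕ) := rfl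
lemma colB_val (j : Fin (q + 1)) : ((colB p q j : Fin (p + 1 + q)) : ℕ) = p + (j : ℕ) := rfl

lemma eq_rowA (i : Fin (p + 1 + q)) (h : (i : ℕ) < p + 1) : i = rowA p q ⟨(i : ℕ), h⟩ :=
  Fin.ext rfl

lemma eq_rowB (i : Fin (p + 1 + q)) (h : p + 1 ≤ (i : ℕ)) :
    i = rowB p q ⟨(i : ℕ) - (p + 1), by have := i.isLt; omega⟩ := by
  apply Fin.ext
  show (i : ℕ) = p + 1 + ((i : ℕ) - (p + 1))
  omega

lemma eq_colA (j : Fin (p + 1 + q)) (h : (j : ℕ) < p) : j = colA p q ⟨(j : ℕ), h⟩ :=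
  Fin.ext rfl

lemma eq_colB (j : Fin (p + 1 + q)) (h : p ≤ (j : ℕ)) :
    j = colB p q ⟨(j : ℕ) - p, by have := j.isLt; omega⟩ := by
  apply Fin.ext
  show (j : ℕ) = p + ((j : ℕ) - p)
  omega

lemma sum_split (f : Fin (p + 1 + q) → ℝ) :
    ∑ k, f k = (∑ i : Fin (p + 1), f (rowA p q i)) + ∑ i : Fin q, f (rowB p q i) := by
  rw [← Equiv.sum_comp (finSumFinEquiv : Fin (p + 1) ⊕ Fin q ≃ Fin (p + 1 + q)) f,
    Fintype.sum_sum_type]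
  rfl

lemma prod_split (f : Fin (p + 1 + q) → ℝ) :
    ∏ k, f k = (∏ i : Fin (p + 1), f (rowA p q i)) * ∏ i : Fin q, f (rowB p q i) := by
  rw [← Equiv.prod_comp (finSumFinEquiv : Fin (p + 1) ⊕ Fin q ≃ Fin (p + 1 + q)) f,
    Fintype.prod_sum_type]
  rfl

end Helpers

/-- Lemma 1 of the paper, with `n = p + 1` and `m = q + 1`:
Let `M` be the square matrix of size `(p+1) + q = (m+n-1)` whose
* top-left `(p+1) × p` block has first row zero and subdiagonal entries
  `a 0 = a₂, ..., a (p-1) = aₙ`;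
* top-right `(p+1) × (q+1)` block is a 0/(-1) Ferrers matrix `C` whose first row
  consists entirely of `-1`'s;
* bottom-left `q × p` block is the corresponding part of `Cᵀ`;
* bottom-right `q × (q+1)` block is `diag(0, b₂, ..., b_m)` (first column zero);
with `a₂ ≥ ... ≥ aₙ`, `b₂ ≥ ... ≥ b_m`, each of the rows `2, ..., n` summing to
zero and each of the last `m - 1` columns summing to zero.  Then
`det M = (-1)^n ∏ aᵢ ∏ bⱼ`. -/
theorem stmt_12 (p q : ℕ) (a : Fin p → ℝ) (b : Fin q → ℝ)
    (C : Fin (p + 1) → Fin (q + 1) → ℝ)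
    (M : Matrix (Fin (p + 1 + q)) (Fin (p + 1 + q)) ℝ)
    -- entries of the four blocks
    (hTL : ∀ (i : Fin (p + 1)) (j : Fin p),
      M (rowA p q i) (colA p q j) = if (i : ℕ) = (j : ℕ) + 1 then a j else 0)
    (hTR : ∀ (i : Fin (p + 1)) (j : Fin (q + 1)), M (rowA p q i) (colB p q j) = C i j)
    (hBL : ∀ (i : Fin q) (j : Fin p), M (rowB p q i) (colA p q j) = C j.succ i.succ)
    (hBR : ∀ (i : Fin q) (j : Fin (q + 1)),
      M (rowB p q i) (colB p q j) = if (j : ℕ) = (i : ℕ) + 1 then b i else 0)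
    -- `C` is a Ferrers matrix of 0's and -1's with full first row
    (hC01 : ∀ i j, C i j = 0 ∨ C i j = -1)
    (hCferrers : ∀ i j, C i j = -1 → ∀ i' ≤ i, ∀ j' ≤ j, C i' j' = -1)
    (hCrow0 : ∀ j, C 0 j = -1)
    -- ordering of the diagonal entries
    (ha : Antitone a) (hb : Antitone b)
    -- rows 2..n of `M` sum to zero, i.e. `aᵢ` is the number of -1's in row `i` of `C`
    (hrowsum : ∀ i : Fin p, a i + ∑ j, C i.succ j = 0)
    -- the last m-1 columns of `M` sum to zero
    (hcolsum : ∀ j : Fin q, b j + ∑ i, C i j.succ = 0) :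
    M.det = (-1) ^ (p + 1) * (∏ i, a i) * ∏ j, b j := by
  classical
  by_cases hA : ∀ t : Fin p, a t ≠ 0
  · -- Main case: all `a t` nonzero.
    -- the elimination coefficients
    set lv : Fin q → Fin (p + 1) → ℝ :=
      fun i' => Fin.cases (∑ t : Fin p, C t.succ i'.succ / a t)
        (fun t => -C t.succ i'.succ / a t) with hlv
    have hlv0 : ∀ i' : Fin q, lv i' 0 = ∑ t : Fin p, C t.succ i'.succ / a t := by
      intro i'; simp [hlv]
    have hlvs : ∀ (i' : Fin q) (t : Fin p), lv i' t.succ = -C t.succ i'.succ / a t := by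
      intro i' t; simp [hlv]
    set L : Matrix (Fin (p + 1 + q)) (Fin (p + 1 + q)) ℝ :=
      fun i j => if h : p + 1 ≤ (i : ℕ) ∧ (j : ℕ) < p + 1 then
          lv ⟨(i : ℕ) - (p + 1), by have := i.isLt; omega⟩ ⟨(j : ℕ), h.2⟩
        else 0 with hLdef
    have hLval : ∀ i j, L i j = if h : p + 1 ≤ (i : ℕ) ∧ (j : ℕ) < p + 1 then
        lv ⟨(i : ℕ) - (p + 1), by have := i.isLt; omega⟩ ⟨(j : ℕ), h.2⟩ else 0 :=
      fun i j => rfl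
    set N : Matrix (Fin (p + 1 + q)) (Fin (p + 1 + q)) ℝ := (1 + L) * M with hNdef
    have hLA : ∀ (i : Fin (p + 1)) (k : Fin (p + 1 + q)), L (rowA p q i) k = 0 := by
      intro i k
      rw [hLval]
      exact dif_neg (by rw [rowA_val]; omega)
    have hLB : ∀ (i' : Fin q) (k : Fin (p + 1 + q)),
        L (rowB p q i') k = if h : (k : ℕ) < p + 1 then lv i' ⟨(k : ℕ), h⟩ else 0 := by
      intro i' k
      rw [hLval]
      by_cases h : (k : ℕ) < p + 1
      · rw [dif_pos (⟨by rw [rowB_val]; omega, h⟩ :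
          p + 1 ≤ ((rowB p q i' : Fin (p+1+q)) : ℕ) ∧ (k : ℕ) < p + 1), dif_pos h]
        congr 1
        apply Fin.ext
        show ((rowB p q i' : Fin (p+1+q)) : ℕ) - (p + 1) = (i' : ℕ)
        rw [rowB_val]; omega
      · rw [dif_neg (by tauto), dif_neg h]
    have hNA : ∀ (i : Fin (p + 1)) (k : Fin (p + 1 + q)),
        N (rowA p q i) k = M (rowA p q i) k := by
      intro i k
      rw [hNdef, Matrix.add_mul, Matrix.one_mul, Matrix.add_apply, Matrix.mul_apply]
      simp [hLA]
    have hLM : ∀ (i' : Fin q) (k : Fin (p + 1 + q)),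
        N (rowB p q i') k
          = M (rowB p q i') k + ∑ j' : Fin (p + 1), lv i' j' * M (rowA p q j') k := by
      intro i' k
      rw [hNdef, Matrix.add_mul, Matrix.one_mul, Matrix.add_apply, Matrix.mul_apply]
      congr 1
      rw [sum_split (fun j => L (rowB p q i') j * M j k)]
      have h2 : ∀ j' : Fin q, L (rowB p q i') (rowB p q j') * M (rowB p q j') k = 0 := by
        intro j'
        rw [hLB, dif_neg (by rw [rowB_val]; omega), zero_mul]
      have h1 : ∀ j' : Fin (p + 1),
          L (rowB p q i') (rowA p q j') = lv i' j' := by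
        intro j'
        rw [hLB, dif_pos (show ((rowA p q j' : Fin (p+1+q)) : ℕ) < p + 1 from j'.isLt)]
        exact congrArg _ (Fin.ext rfl)
      have e1 : ∑ j' : Fin (p + 1), L (rowB p q i') (rowA p q j') * M (rowA p q j') k
          = ∑ j' : Fin (p + 1), lv i' j' * M (rowA p q j') k :=
        Finset.sum_congr rfl fun j' _ => by rw [h1]
      have e2 : ∑ j' : Fin q, L (rowB p q i') (rowB p q j') * M (rowB p q j') k = 0 :=
        Finset.sum_eq_zero fun j' _ => h2 j'
      rw [e1, e2, add_zero]
    -- elimination of the bottom-left block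
    have hNBA : ∀ (i' : Fin q) (t' : Fin p), N (rowB p q i') (colA p q t') = 0 := by
      intro i' t'
      rw [hLM, hBL]
      have hs : ∀ j' : Fin (p + 1), lv i' j' * M (rowA p q j') (colA p q t')
          = if j' = t'.succ then -C t'.succ i'.succ else 0 := by
        intro j'
        rw [hTL]
        by_cases h : j' = t'.succ
        · subst h
          rw [if_pos (by simp), if_pos rfl, hlvs, div_mul_cancel₀ _ (hA t')]
        · rw [if_neg (fun hc => h (Fin.ext (by simpa using hc))), mul_zero, if_neg h]
      rw [Finset.sum_congr rfl fun j' _ => hs j', Finset.sum_ite_eq',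
        if_pos (Finset.mem_univ _)]
      ring
    -- the bottom-right block is lower triangular (with diagonal b) after elimination
    have hNBB : ∀ (i' : Fin q) (k : Fin (q + 1)), (k : ℕ) ≤ (i' : ℕ) + 1 →
        N (rowB p q i') (colB p q k) = if (k : ℕ) = (i' : ℕ) + 1 then b i' else 0 := by
      intro i' k hk
      rw [hLM, hBR]
      have hCsum : ∑ j' : Fin (p + 1), lv i' j' * M (rowA p q j') (colB p q k)
          = ∑ j' : Fin (p + 1), lv i' j' * C j' k :=
        Finset.sum_congr rfl fun j' _ => by rw [hTR]
      have hsum0 : ∑ j' : Fin (p + 1), lv i' j' * C j' k = 0 := by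
        have e1 : ∑ t : Fin p, lv i' t.succ * C t.succ k
            = ∑ t : Fin p, -C t.succ i'.succ / a t * C t.succ k :=
          Finset.sum_congr rfl fun t _ => by rw [hlvs]
        rw [Fin.sum_univ_succ, hlv0, hCrow0 k, e1, Finset.sum_mul,
          ← Finset.sum_add_distrib]
        refine Finset.sum_eq_zero fun t _ => ?_
        rcases hC01 t.succ i'.succ with h | h
        · rw [h]; ring
        · rw [h, hCferrers t.succ i'.succ h t.succ le_rfl k
            (by rw [Fin.le_def]; simpa using hk)]
          ring
      rw [hCsum, hsum0, add_zero]
    -- determinant of the elimination matrix is 1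
    have hdetE : (1 + L).det = 1 := by
      have hBT : (1 + L).BlockTriangular OrderDual.toDual := by
        intro i j hij
        have hij' : (i : ℕ) < (j : ℕ) := hij
        rw [Matrix.add_apply, Matrix.one_apply_ne (by exact fun hc => by rw [hc] at hij'; omega),
          hLval, dif_neg (by omega), add_zero]
      rw [Matrix.det_of_lowerTriangular _ hBT]
      have h1 : ∀ i : Fin (p + 1 + q), (1 + L) i i = 1 := by
        intro i
        rw [Matrix.add_apply, Matrix.one_apply_eq, hLval, dif_neg (by omega), add_zero]
      rw [Finset.prod_congr rfl fun i _ => h1 i, Finset.prod_const_one]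
    have hdetNM : N.det = M.det := by
      rw [hNdef, Matrix.det_mul, hdetE, one_mul]
    -- the cyclic permutation of the rows
    have hn : p + q + 1 = p + 1 + q := by omega
    have hplt : p < p + q + 1 := by omega
    set c : Equiv.Perm (Fin (p + 1 + q)) :=
      (finCongr hn).permCongr (Fin.cycleRange ⟨p, hplt⟩) with hcdef
    have hcval : ∀ i : Fin (p + 1 + q),
        (c i : ℕ) = ((Fin.cycleRange (⟨p, hplt⟩ : Fin (p + q + 1))
          ⟨(i : ℕ), by have := i.isLt; omega⟩ : Fin (p + q + 1)) : ℕ) := by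
      intro i
      rw [hcdef, Equiv.permCongr_apply]
      rw [show (finCongr hn).symm i = (⟨(i : ℕ), by have := i.isLt; omega⟩ : Fin (p + q + 1))
        from Fin.ext rfl]
      rfl
    have hc_lt : ∀ i : Fin (p + 1 + q), (i : ℕ) < p → (c i : ℕ) = (i : ℕ) + 1 := by
      intro i hi
      rw [hcval, Fin.coe_cycleRange_of_lt (by rw [Fin.lt_def]; exact hi)]
    have hc_eq : ∀ i : Fin (p + 1 + q), (i : ℕ) = p → (c i : ℕ) = 0 := by
      intro i hi
      rw [hcval]
      have h1 : (⟨(i : ℕ), by have := i.isLt; omega⟩ : Fin (p + q + 1)) = ⟨p, hplt⟩ :=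
        Fin.ext hi
      rw [h1, Fin.cycleRange_self]
      rfl
    have hc_gt : ∀ i : Fin (p + 1 + q), p < (i : ℕ) → c i = i := by
      intro i hi
      apply Fin.ext
      rw [hcval, Fin.cycleRange_of_gt (by rw [Fin.lt_def]; exact hi)]
    set N' : Matrix (Fin (p + 1 + q)) (Fin (p + 1 + q)) ℝ := N.submatrix c id with hN'def
    -- N' is upper triangular
    have hBT : N'.BlockTriangular id := by
      intro i j hij
      have hij' : (j : ℕ) < (i : ℕ) := hij
      rw [hN'def, Matrix.submatrix_apply, id]
      rcases lt_trichotomy ((i : ℕ)) p with hi | hi | hi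
      · have hci : c i = rowA p q ⟨(i : ℕ) + 1, by omega⟩ := by
          apply Fin.ext; rw [hc_lt i hi, rowA_val]
        have hj : (j : ℕ) < p := by omega
        rw [hci, eq_colA j hj, hNA, hTL, if_neg (by simp; omega)]
      · have hci : c i = rowA p q 0 := by
          apply Fin.ext; rw [hc_eq i hi, rowA_val]; rfl
        have hj : (j : ℕ) < p := by omega
        rw [hci, eq_colA j hj, hNA, hTL, if_neg (by simp)]
      · rw [hc_gt i hi, eq_rowB i (by omega)]
        by_cases hj : (j : ℕ) < p
        · rw [eq_colA j hj, hNBA]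
        · rw [eq_colB j (by omega), hNBB _ _ (by simp; omega),
            if_neg (by simp; omega)]
    have hdiag : ∏ i, N' i i = (∏ t, a t) * (-1) * ∏ j', b j' := by
      rw [prod_split (fun i => N' i i)]
      congr 1
      · rw [Fin.prod_univ_castSucc (fun i : Fin (p + 1) => N' (rowA p q i) (rowA p q i))]
        congr 1
        · apply Finset.prod_congr rfl
          intro t _
          have hval : ((rowA p q t.castSucc : Fin (p + 1 + q)) : ℕ) = (t : ℕ) := rfl
          have hci : c (rowA p q t.castSucc) = rowA p q ⟨(t : ℕ) + 1, by omega⟩ := by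
            apply Fin.ext
            rw [hc_lt _ (by rw [hval]; exact t.isLt), hval, rowA_val]
          rw [hN'def, Matrix.submatrix_apply, id, hci,
            show rowA p q t.castSucc = colA p q ⟨(t : ℕ), t.isLt⟩ from Fin.ext rfl,
            hNA, hTL, if_pos (by simp)]
          try exact congrArg a (Fin.ext rfl)
        · have hval : ((rowA p q (Fin.last p) : Fin (p + 1 + q)) : ℕ) = p := rfl
          have hci : c (rowA p q (Fin.last p)) = rowA p q 0 := by
            apply Fin.ext
            rw [hc_eq _ hval, rowA_val]
            try rfl
          rw [hN'def, Matrix.submatrix_apply, id, hci,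
            show rowA p q (Fin.last p) = colB p q 0 from Fin.ext (by
              simp [rowA_val, colB_val]),
            hNA, hTR, hCrow0]
      · apply Finset.prod_congr rfl
        intro j' _
        have hval : ((rowB p q j' : Fin (p + 1 + q)) : ℕ) = p + 1 + (j' : ℕ) := rfl
        rw [hN'def, Matrix.submatrix_apply, id, hc_gt _ (by rw [hval]; omega)]
        nth_rewrite 2 [show rowB p q j' = colB p q j'.succ from
          Fin.ext (by rw [rowB_val, colB_val]; simp; omega)]
        rw [hNBB _ _ (by simp), if_pos (by simp)]
    -- assemble
    have hsign : N'.det = ((-1 : ℝ) ^ p) * N.det := by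
      rw [hN'def, Matrix.det_permute]
      congr 1
      rw [hcdef, Equiv.Perm.sign_permCongr, Fin.sign_cycleRange]
      push_cast
      norm_num
    have htri : N'.det = (∏ t, a t) * (-1) * ∏ j', b j' := by
      rw [Matrix.det_of_upperTriangular hBT, hdiag]
    have hfinal : ((-1 : ℝ) ^ p) * M.det = (∏ t, a t) * (-1) * ∏ j', b j' := by
      rw [← hdetNM, ← hsign, htri]
    have hsq : ((-1 : ℝ) ^ p) * ((-1 : ℝ) ^ p) = 1 := by
      rw [← pow_add, Even.neg_one_pow ⟨p, by ring⟩]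
    calc M.det = ((-1 : ℝ) ^ p * (-1 : ℝ) ^ p) * M.det := by rw [hsq, one_mul]
    _ = (-1 : ℝ) ^ p * ((∏ t, a t) * (-1) * ∏ j', b j') := by
        rw [mul_assoc, hfinal]
    _ = (-1) ^ (p + 1) * (∏ i, a i) * ∏ j, b j := by
        rw [pow_succ]; ring
  · -- Degenerate case: some `a t = 0`; then column `colA t` of `M` vanishes.
    push_neg at hA
    obtain ⟨t, ht⟩ := hA
    have hsum : ∑ j, C t.succ j = 0 := by
      have := hrowsum t; rw [ht] at this; linarith
    have hCrow : ∀ k, C t.succ k = 0 := by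
      intro k
      refine (Finset.sum_eq_zero_iff_of_nonpos ?_).mp hsum k (Finset.mem_univ k)
      intro j _
      rcases hC01 t.succ j with h | h <;> rw [h] <;> norm_num
    have hcol : ∀ i, M i (colA p q t) = 0 := by
      intro i
      by_cases h : (i : ℕ) < p + 1
      · rw [eq_rowA i h, hTL]
        split <;> [exact ht; rfl]
      · rw [eq_rowB i (by omega), hBL, hCrow]
    rw [Matrix.det_eq_zero_of_column_eq_zero _ hcol,
      Finset.prod_eq_zero (Finset.mem_univ t) ht]
    ring
end
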